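/- (S-procedure) Let M ≥ 1 and, for n ∈ {1,2}, let Y_n ∈ ℂ^{M×M} be Hermitian, y_n ∈ ℂ^M, and c_n ∈ ℝ, and define m_n(x) = x^H Y_n x + 2 Re(x^H y_n) + c_n for x ∈ ℂ^M (a real-valued function since Y_n is Hermitian). Suppose there exists x̌ ∈ ℂ^M with m_2(x̌) < 0. Then the following are equivalent: (1) for all x ∈ ℂ^M, m_2(x) ≤ 0 implies m_1(x) ≥ 0; (2) there exists β ≥ 0 such that the (M+1)×(M+1) block matrix [[Y_1, y_1],[y_1^H, c_1]] + β·[[Y_2, y_2],[y_2^H, c_2]] is positive semidefinite. -/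

import Mathlib

/-!
Write `z = (x, t) ∈ ℂ^M × ℂ` and `B_n = [[Y_n, y_n], [y_nᴴ, c_n]]`. Then `zᴴ B_n z = |t|² m_n(x / t)`
for `t ≠ 0`, so by continuity the hypothesis becomes the homogeneous implication
`zᴴ B₂ z < 0 → zᴴ B₁ z ≥ 0`. Over `ℂ` the joint range `{(zᴴ B₁ z, zᴴ B₂ z)}` of two Hermitian forms
is a convex cone (Hausdorff–Toeplitz, Dines), and this cone misses the open negative quadrant.
Separating the two by a line through the origin gives `ξ₁ zᴴ B₁ z + ξ₂ zᴴ B₂ z ≥ 0` with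
`ξ₁, ξ₂ ≥ 0`; the point `x̌` forces `ξ₁ > 0`, and `β = ξ₂ / ξ₁`.
-/

open Matrix BigOperators
open scoped ComplexOrder

noncomputable section

/-- The `(M+1) × (M+1)` Hermitian block matrix `[[A, b], [bᴴ, c]]`. -/
def blockMat {M : ℕ} (A : Matrix (Fin M) (Fin M) ℂ) (b : Fin M → ℂ) (c : ℝ) :
    Matrix (Fin M ⊕ Fin 1) (Fin M ⊕ Fin 1) ℂ :=
  Matrix.fromBlocks A (Matrix.of fun i (_ : Fin 1) => b i)
    (Matrix.of fun (_ : Fin 1) j => star (b j)) (Matrix.of fun _ _ => (c : ℂ))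

/-- The real-valued quadratic function `m(x) = xᴴ Y x + 2 Re(xᴴ y) + c`. -/
def quadFun {M : ℕ} (Y : Matrix (Fin M) (Fin M) ℂ) (y : Fin M → ℂ) (c : ℝ)
    (x : Fin M → ℂ) : ℝ :=
  (star x ⬝ᵥ Y.mulVec x).re + 2 * (star x ⬝ᵥ y).re + c

open ComplexConjugate in
lemma Complex.exists_norm_eq_one_re_mul_eq_zero (d : ℂ) : ∃ ξ : ℂ, ‖ξ‖ = 1 ∧ (ξ * d).re = 0 := by
  obtain rfl | hd := eq_or_ne d 0
  · exact ⟨1, by simp, by simp⟩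
  refine ⟨I * conj d / ‖d‖, by simp [hd], ?_⟩
  rw [div_mul_eq_mul_div, mul_assoc, Complex.conj_mul']
  simp [← Complex.ofReal_pow]

lemma exists_sq_mul_add_mul_eq {r₁ r₂ a₁ a₂ : ℝ} (h : a₁ * r₂ = a₂ * r₁) :
    ∃ μ : ℝ, μ ^ 2 * r₁ + μ * a₁ = r₁ ∧ μ ^ 2 * r₂ + μ * a₂ = r₂ := by
  by_cases hr : r₁ ^ 2 + r₂ ^ 2 = 0
  · obtain ⟨rfl, rfl⟩ : r₁ = 0 ∧ r₂ = 0 := ⟨by nlinarith, by nlinarith⟩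
    exact ⟨0, by simp, by simp⟩
  set κ := (a₁ * r₁ + a₂ * r₂) / (r₁ ^ 2 + r₂ ^ 2)
  have ha₁ : a₁ = κ * r₁ := by rw [div_mul_eq_mul_div, eq_div_iff hr]; linear_combination r₂ * h
  have ha₂ : a₂ = κ * r₂ := by rw [div_mul_eq_mul_div, eq_div_iff hr]; linear_combination -r₁ * h
  set μ := (√(κ ^ 2 + 4) - κ) / 2
  have hμ : μ ^ 2 + κ * μ = 1 := by
    have := Real.sq_sqrt (show 0 ≤ κ ^ 2 + 4 by positivity)
    linear_combination this / 4
  exact ⟨μ, by rw [ha₁]; linear_combination r₁ * hμ, by rw [ha₂]; linear_combination r₂ * hμ⟩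

namespace Matrix

variable {ι : Type*} [Fintype ι]

def reForm (B : Matrix ι ι ℂ) (z : ι → ℂ) : ℝ := (star z ⬝ᵥ B *ᵥ z).re

lemma continuous_reForm (B : Matrix ι ι ℂ) : Continuous (reForm B) := by
  unfold reForm
  fun_prop

lemma reForm_add (A B : Matrix ι ι ℂ) (z : ι → ℂ) :
    reForm (A + B) z = reForm A z + reForm B z := by
  simp [reForm, add_mulVec]

lemma reForm_ofReal_smul (r : ℝ) (B : Matrix ι ι ℂ) (z : ι → ℂ) :
    reForm ((r : ℂ) • B) z = r * reForm B z := by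
  simp [reForm, smul_mulVec]

lemma reForm_smul (B : Matrix ι ι ℂ) (a : ℂ) (z : ι → ℂ) :
    reForm B (a • z) = Complex.normSq a * reForm B z := by
  simp only [reForm, star_smul, mulVec_smul, smul_dotProduct, dotProduct_smul, smul_eq_mul,
    Complex.star_def, ← mul_assoc, Complex.mul_conj, Complex.re_ofReal_mul]

lemma reForm_add_smul (B : Matrix ι ι ℂ) (u v : ι → ℂ) (ζ : ℂ) :
    reForm B (u + ζ • v) = reForm B u + Complex.normSq ζ * reForm B v
      + (ζ * (star u ⬝ᵥ B *ᵥ v + star (star v ⬝ᵥ B *ᵥ u))).re := by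
  rw [← reForm_smul]
  simp only [reForm, star_add, mulVec_add, dotProduct_add, add_dotProduct, Complex.add_re,
    mulVec_smul, dotProduct_smul, star_smul, smul_dotProduct, smul_eq_mul, Complex.star_def,
    mul_add]
  rw [← Complex.conj_re (_ * (star v ⬝ᵥ _)), map_mul, Complex.conj_conj]
  ring

lemma posSemidef_iff_reForm_nonneg {A : Matrix ι ι ℂ} (hA : A.IsHermitian) :
    A.PosSemidef ↔ ∀ z, 0 ≤ reForm A z := by
  have him : ∀ z : ι → ℂ, (star z ⬝ᵥ A *ᵥ z).im = 0 := hA.im_star_dotProduct_mulVec_self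
  simp [posSemidef_iff_dotProduct_mulVec, hA, Complex.nonneg_iff, reForm, him]

theorem exists_reForm_eq_add (B₁ B₂ : Matrix ι ι ℂ) (u v : ι → ℂ) :
    ∃ w, reForm B₁ w = reForm B₁ u + reForm B₁ v ∧ reForm B₂ w = reForm B₂ u + reForm B₂ v := by
  let cross (B : Matrix ι ι ℂ) : ℂ := star u ⬝ᵥ B *ᵥ v + star (star v ⬝ᵥ B *ᵥ u)
  -- `w = u + μ ξ v`: the phase `ξ` makes the vector of cross terms `(Re (ξ cross Bₙ))ₙ` parallel
  -- to `(reForm Bₙ v)ₙ`, after which a real `μ` solves both equations at once.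
  obtain ⟨ξ, hξ, hre⟩ := Complex.exists_norm_eq_one_re_mul_eq_zero
    (cross B₁ * reForm B₂ v - cross B₂ * reForm B₁ v)
  obtain ⟨μ, h₁, h₂⟩ := exists_sq_mul_add_mul_eq (r₁ := reForm B₁ v) (r₂ := reForm B₂ v)
    (a₁ := (ξ * cross B₁).re) (a₂ := (ξ * cross B₂).re)
    (by simpa [mul_sub, ← mul_assoc, sub_eq_zero] using hre)
  have hw (B : Matrix ι ι ℂ) : reForm B (u + ((μ : ℂ) * ξ) • v) =
      reForm B u + (μ ^ 2 * reForm B v + μ * (ξ * cross B).re) := by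
    rw [reForm_add_smul, Complex.normSq_mul, Complex.normSq_ofReal, Complex.normSq_eq_norm_sq ξ,
      hξ, mul_assoc (μ : ℂ), Complex.re_ofReal_mul]
    ring
  exact ⟨u + ((μ : ℂ) * ξ) • v, by rw [hw, h₁], by rw [hw, h₂]⟩

def jointRange (B₁ B₂ : Matrix ι ι ℂ) : PointedCone ℝ (ℝ × ℝ) where
  carrier := Set.range fun z => (reForm B₁ z, reForm B₂ z)
  add_mem' := by
    rintro _ _ ⟨u, rfl⟩ ⟨v, rfl⟩
    obtain ⟨w, h₁, h₂⟩ := exists_reForm_eq_add B₁ B₂ u v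
    exact ⟨w, by simp [h₁, h₂]⟩
  zero_mem' := ⟨0, by simp [reForm]⟩
  smul_mem' := by
    rintro c _ ⟨z, rfl⟩
    refine ⟨(√(c : ℝ) : ℂ) • z, ?_⟩
    simp only [reForm_smul, Complex.normSq_ofReal, Real.mul_self_sqrt c.2, Prod.smul_mk]
    rfl

end Matrix

namespace PointedCone

open Set in
theorem exists_nonneg_weights_of_forall_snd_neg (K : PointedCone ℝ (ℝ × ℝ))
    (hK : ∀ p ∈ K, p.2 < 0 → 0 ≤ p.1) :
    ∃ ξ₁ ξ₂ : ℝ, 0 ≤ ξ₁ ∧ 0 ≤ ξ₂ ∧ 0 < ξ₁ + ξ₂ ∧ ∀ p ∈ K, 0 ≤ ξ₁ * p.1 + ξ₂ * p.2 := by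
  have hdisj : Disjoint (Iio 0 ×ˢ Iio 0) (K : Set (ℝ × ℝ)) :=
    disjoint_left.2 fun p ⟨h₁, h₂⟩ hp => (hK p hp h₂).not_gt h₁
  obtain ⟨f, u, hfQ, hfK⟩ := geometric_hahn_banach_open ((convex_Iio 0).prod (convex_Iio 0))
    (isOpen_Iio.prod isOpen_Iio) K.convex hdisj
  have hf (p : ℝ × ℝ) : f p = f (1, 0) * p.1 + f (0, 1) * p.2 := by
    conv_lhs => rw [show p = p.1 • (1, 0) + p.2 • (0, 1) by simp]
    rw [map_add, map_smul, map_smul, smul_eq_mul, smul_eq_mul, mul_comm, mul_comm p.2]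
  have hu : u ≤ 0 := by simpa using hfK 0 K.zero_mem
  have hfQ' : ∀ p ∈ Iic 0 ×ˢ Iic 0, f p ≤ u := by
    rw [← closure_Iio, ← closure_prod_eq]
    exact closure_minimal (fun p hp => (hfQ p hp).le) (isClosed_le f.continuous continuous_const)
  refine ⟨f (1, 0), f (0, 1), ?_, ?_, ?_, fun p hp => ?_⟩
  · linarith [hf (-1, 0), hfQ' (-1, 0) (by simp)]
  · linarith [hf (0, -1), hfQ' (0, -1) (by simp)]
  · linarith [hf (-1, -1), hfQ (-1, -1) (by simp)]
  · rw [← hf]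
    -- a negative value of `f` on the cone `K` could be scaled below `u`
    by_contra! hneg
    have := hfK _ (K.smul_mem (div_nonneg_of_nonpos (by linarith) hneg.le : 0 ≤ (u - 1) / f p) hp)
    rw [map_smul, smul_eq_mul, div_mul_cancel₀ _ hneg.ne] at this
    linarith

theorem exists_nonneg_forall_fst_add_mul_snd_nonneg (K : PointedCone ℝ (ℝ × ℝ))
    (hK : ∀ p ∈ K, p.2 < 0 → 0 ≤ p.1) (hslater : ∃ p ∈ K, p.2 < 0) :
    ∃ β : ℝ, 0 ≤ β ∧ ∀ p ∈ K, 0 ≤ p.1 + β * p.2 := by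
  obtain ⟨ξ₁, ξ₂, hξ₁, hξ₂, hξ, hKξ⟩ := K.exists_nonneg_weights_of_forall_snd_neg hK
  obtain ⟨p, hp, hp₂⟩ := hslater
  have hξ₁ : 0 < ξ₁ := by
    refine hξ₁.lt_of_ne fun h => ?_
    have := hKξ p hp
    rw [← h] at this hξ
    nlinarith
  refine ⟨ξ₂ / ξ₁, by positivity, fun q hq => ?_⟩
  calc 0 ≤ (ξ₁ * q.1 + ξ₂ * q.2) / ξ₁ := div_nonneg (hKξ q hq) hξ₁.le
    _ = q.1 + ξ₂ / ξ₁ * q.2 := by field_simp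

end PointedCone

theorem nonneg_of_neg_of_forall_apply_ne_zero {ι : Type*} [DecidableEq ι]
    {f g : (ι → ℂ) → ℝ} (hf : Continuous f) (hg : Continuous g) (i : ι)
    (h : ∀ z, z i ≠ 0 → g z < 0 → 0 ≤ f z) (z : ι → ℂ) (hz : g z < 0) : 0 ≤ f z := by
  by_contra! hfz
  let w (s : ℂ) : ι → ℂ := Function.update z i s
  have hw : Continuous w := continuous_const.update i continuous_id
  have hU : IsOpen {s | g (w s) < 0 ∧ f (w s) < 0} :=
    (isOpen_lt (hg.comp hw) continuous_const).inter (isOpen_lt (hf.comp hw) continuous_const)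
  obtain ⟨s, ⟨hgs, hfs⟩, hs⟩ := (dense_compl_singleton (0 : ℂ)).inter_open_nonempty _ hU
    ⟨z i, by simpa [w] using ⟨hz, hfz⟩⟩
  exact (h (w s) (by simpa [w] using hs) hgs).not_gt hfs

section BlockMat

variable {M : ℕ}

lemma blockMat_isHermitian {Y : Matrix (Fin M) (Fin M) ℂ} (hY : Y.IsHermitian)
    (y : Fin M → ℂ) (c : ℝ) : (blockMat Y y c).IsHermitian := by
  apply Matrix.IsHermitian.ext
  rintro (i | i) (j | j) <;> simp [blockMat, hY.apply]

lemma reForm_blockMat_elim_one (Y : Matrix (Fin M) (Fin M) ℂ) (y : Fin M → ℂ) (c : ℝ)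
    (x : Fin M → ℂ) : reForm (blockMat Y y c) (Sum.elim x fun _ => 1) = quadFun Y y c x := by
  simp [reForm, blockMat, quadFun, mulVec, dotProduct, Finset.sum_add_distrib, mul_add]
  simp only [mul_comm (y _).re, mul_comm (y _).im]
  ring

lemma reForm_blockMat_of_ne_zero (Y : Matrix (Fin M) (Fin M) ℂ) (y : Fin M → ℂ) (c : ℝ)
    {z : Fin M ⊕ Fin 1 → ℂ} (hz : z (Sum.inr 0) ≠ 0) :
    reForm (blockMat Y y c) z =
      Complex.normSq (z (Sum.inr 0)) * quadFun Y y c ((z (Sum.inr 0))⁻¹ • (z ∘ Sum.inl)) := by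
  have hz' : z = z (Sum.inr 0) • Sum.elim ((z (Sum.inr 0))⁻¹ • (z ∘ Sum.inl)) fun _ => 1 := by
    ext (i | i)
    · simp [hz]
    · simp [Subsingleton.elim i 0]
  conv_lhs => rw [hz', reForm_smul, reForm_blockMat_elim_one]

theorem reForm_blockMat_nonneg_of_neg {Y₁ Y₂ : Matrix (Fin M) (Fin M) ℂ} {y₁ y₂ : Fin M → ℂ}
    {c₁ c₂ : ℝ} (h : ∀ x, quadFun Y₂ y₂ c₂ x ≤ 0 → 0 ≤ quadFun Y₁ y₁ c₁ x)
    (z : Fin M ⊕ Fin 1 → ℂ) (hz : reForm (blockMat Y₂ y₂ c₂) z < 0) :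
    0 ≤ reForm (blockMat Y₁ y₁ c₁) z := by
  refine nonneg_of_neg_of_forall_apply_ne_zero (continuous_reForm _) (continuous_reForm _)
    (Sum.inr 0) (fun z hz₀ hz => ?_) z hz
  rw [reForm_blockMat_of_ne_zero _ _ _ hz₀] at hz ⊢
  exact mul_nonneg (Complex.normSq_nonneg _)
    (h _ (neg_of_mul_neg_right hz (Complex.normSq_nonneg _)).le)

end BlockMat

theorem s_procedure_general (M : ℕ)
    (Y₁ Y₂ : Matrix (Fin M) (Fin M) ℂ) (hY₁ : Y₁.IsHermitian) (hY₂ : Y₂.IsHermitian)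
    (y₁ y₂ : Fin M → ℂ) (c₁ c₂ : ℝ)
    (hstrict : ∃ x : Fin M → ℂ, quadFun Y₂ y₂ c₂ x < 0) :
    (∀ x : Fin M → ℂ, quadFun Y₂ y₂ c₂ x ≤ 0 → 0 ≤ quadFun Y₁ y₁ c₁ x) ↔
    (∃ β : ℝ, 0 ≤ β ∧
      (blockMat Y₁ y₁ c₁ + (β : ℂ) • blockMat Y₂ y₂ c₂).PosSemidef) := by
  have hform (β : ℝ) (z) : reForm (blockMat Y₁ y₁ c₁ + (β : ℂ) • blockMat Y₂ y₂ c₂) z =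
      reForm (blockMat Y₁ y₁ c₁) z + β * reForm (blockMat Y₂ y₂ c₂) z := by
    rw [reForm_add, reForm_ofReal_smul]
  constructor
  · intro h
    obtain ⟨x, hx⟩ := hstrict
    obtain ⟨β, hβ, hK⟩ := (jointRange (blockMat Y₁ y₁ c₁) (blockMat Y₂ y₂ c₂))
      |>.exists_nonneg_forall_fst_add_mul_snd_nonneg
        (by rintro _ ⟨z, rfl⟩; exact reForm_blockMat_nonneg_of_neg h z)
        ⟨_, ⟨Sum.elim x fun _ => 1, rfl⟩, by simpa [reForm_blockMat_elim_one] using hx⟩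
    have hherm := (blockMat_isHermitian hY₁ y₁ c₁).add
      ((blockMat_isHermitian hY₂ y₂ c₂).smul (Complex.conj_ofReal β))
    exact ⟨β, hβ, (posSemidef_iff_reForm_nonneg hherm).2 fun z => hform β z ▸ hK _ ⟨z, rfl⟩⟩
  · rintro ⟨β, hβ, hpsd⟩ x hx
    have := (posSemidef_iff_reForm_nonneg hpsd.isHermitian).1 hpsd (Sum.elim x fun _ => 1)
    rw [hform, reForm_blockMat_elim_one, reForm_blockMat_elim_one] at this
    nlinarith

/-- The S-procedure (Lemma 1 of the paper). -/
theorem s_procedure (M : ℕ) (hM : 1 ≤ M)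
    (Y₁ Y₂ : Matrix (Fin M) (Fin M) ℂ) (hY₁ : Y₁.IsHermitian) (hY₂ : Y₂.IsHermitian)
    (y₁ y₂ : Fin M → ℂ) (c₁ c₂ : ℝ)
    (hstrict : ∃ x : Fin M → ℂ, quadFun Y₂ y₂ c₂ x < 0) :
    (∀ x : Fin M → ℂ, quadFun Y₂ y₂ c₂ x ≤ 0 → 0 ≤ quadFun Y₁ y₁ c₁ x) ↔
    (∃ β : ℝ, 0 ≤ β ∧
      (blockMat Y₁ y₁ c₁ + (β : ℂ) • blockMat Y₂ y₂ c₂).PosSemidef) :=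
  s_procedure_general M Y₁ Y₂ hY₁ hY₂ y₁ y₂ c₁ c₂ hstrict

end
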